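/- Let N be concentrated on {0,1,...,K} (K = ∞ allowed) with μ_k = P(N=k) > 0 for k ≤ K satisfying Panjer's recursion (k+1)μ_{k+1}/μ_k = a + b k for all 0 ≤ k ≤ K (with μ_{K+1}=0), and let S_N = ∑_{j=1}^N X_j where X_j are i.i.d. ℤ≥0-valued with pmf (p_k), independent of N, and E S_N < ∞. Then for every bounded g: ℤ≥0 → ℝ, E[ ∑_{l=1}^∞ (a l + b S_N) g(S_N + l) p_l - (1 - b p₀) S_N g(S_N) ] = 0. -/

import Mathlib

/-!
Write `P = ∑ p_l X^l`, so that `convPow p k` lists the coefficients of `P^k` and the pmf of `S_N`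
is `π = ∑ μ_k P^k`. The Euler operator `θ = X·d/dX` satisfies `θ(P^(k+1)) = (k+1) P^k θP` and
`P·θ(P^k) = k P^k θP`; together with `(k+1)μ_{k+1} = (a+bk)μ_k` this gives Panjer's recursion
`∑_{j+l=s} (a l + b j) p_l π_j = s π_s`. Splitting off the term `l = 0`, multiplying by `g(s)` and
summing over `s` turns the recursion into the identity, once the double series over `(j, l)`
converges absolutely. That follows from `E S_N < ∞`, the boundedness of `g` and, when `a ≠ 0`,
from `μ_1 p_l ≤ π_l` with `μ_1 = a μ_0 > 0`, which makes `E X₁` finite.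
-/

/-- `convPow p k` is the `k`-fold convolution of the pmf `p` on `ℤ≥0`. -/
def convPow (p : ℕ → ℝ) : ℕ → ℕ → ℝ
  | 0, s => if s = 0 then 1 else 0
  | k + 1, s => ∑ m ∈ Finset.range (s + 1), convPow p k m * p (s - m)

open PowerSeries
open Finset hiding mk

namespace PowerSeries

variable {R : Type*} [CommSemiring R]

theorem coeff_X_mul_derivative (f : R⟦X⟧) (n : ℕ) :
    coeff n (X * d⁄dX R f) = n * coeff n f := by
  cases n with
  | zero => simp
  | succ n => rw [coeff_succ_X_mul, coeff_derivative, mul_comm, Nat.cast_succ]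

theorem X_mul_derivative_pow_succ (f : R⟦X⟧) (k : ℕ) :
    X * d⁄dX R (f ^ (k + 1)) = (k + 1) • (f ^ k * (X * d⁄dX R f)) := by
  rw [derivative_pow, Nat.add_sub_cancel, nsmul_eq_mul]; push_cast; ring

theorem X_mul_derivative_pow_mul_self (f : R⟦X⟧) (k : ℕ) :
    X * d⁄dX R (f ^ k) * f = k • (f ^ k * (X * d⁄dX R f)) := by
  cases k with
  | zero => simp
  | succ k => rw [X_mul_derivative_pow_succ, smul_mul_assoc, pow_succ]; ring_nf

end PowerSeries

theorem Summable.hasSum_sum_antidiagonal {α : Type*} [AddCommMonoid α] [TopologicalSpace α]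
    [ContinuousAdd α] [RegularSpace α] {f : ℕ × ℕ → α} (hf : Summable f) :
    HasSum (fun n => ∑ x ∈ antidiagonal n, f x) (∑' x, f x) := by
  have := (HasAntidiagonal.sigmaAntidiagonalEquivProd.hasSum_iff).mpr hf.hasSum
  refine this.sigma fun n => ?_
  rw [← sum_coe_sort]
  exact hasSum_fintype _

theorem Summable.of_natCast_mul {f : ℕ → ℝ} (h : Summable fun n : ℕ => n * f n) : Summable f := by
  refine (summable_nat_add_iff 1).mp <|
    Summable.of_norm_bounded ((summable_nat_add_iff 1).mpr h).norm fun n => ?_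
  rw [norm_mul, Real.norm_natCast]
  exact le_mul_of_one_le_left (norm_nonneg _) (by simp)

theorem summable_stein_family {π q g : ℕ → ℝ} {a b C : ℝ} (hπ : Summable π)
    (hjπ : Summable fun j : ℕ => j * π j) (hq : Summable q)
    (haq : Summable fun l : ℕ => a * (l * q l)) (hg : ∀ j, |g j| ≤ C) :
    Summable fun x : ℕ × ℕ =>
      π x.1 * ((a * (x.2 + 1) + b * x.1) * g (x.1 + (x.2 + 1)) * q (x.2 + 1)) := by
  have haq' : Summable fun m : ℕ => a * ((m + 1) * q (m + 1)) := by
    simpa using (summable_nat_add_iff 1).mpr haq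
  have hq' : Summable fun m => q (m + 1) := (summable_nat_add_iff 1).mpr hq
  refine Summable.of_norm_bounded ((Summable.add (hπ.norm.mul_norm haq'.norm)
    ((hjπ.norm.mul_norm hq'.norm).mul_left |b|)).mul_left C) fun x => ?_
  have hC : 0 ≤ C := (abs_nonneg _).trans (hg 0)
  calc _ = ‖g (x.1 + (x.2 + 1))‖ *
          ‖π x.1 * (a * ((x.2 + 1) * q (x.2 + 1))) + b * (x.1 * π x.1 * q (x.2 + 1))‖ := by
        rw [← norm_mul]; ring_nf
    _ ≤ C * (‖π x.1 * (a * ((x.2 + 1) * q (x.2 + 1)))‖ + ‖b * (x.1 * π x.1 * q (x.2 + 1))‖) :=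
        mul_le_mul (hg _) (norm_add_le _ _) (norm_nonneg _) hC
    _ = _ := by simp only [norm_mul, Real.norm_eq_abs, mul_assoc]

theorem convPow_eq_coeff (p : ℕ → ℝ) (k s : ℕ) : convPow p k s = coeff s (mk p ^ k) := by
  induction k generalizing s with
  | zero => simp [convPow, coeff_one]
  | succ k ih =>
    rw [pow_succ, coeff_mul, Nat.sum_antidiagonal_eq_sum_range_succ_mk]
    simp [convPow, ih]

theorem convPow_one (p : ℕ → ℝ) (s : ℕ) : convPow p 1 s = p s := by
  simp [convPow_eq_coeff]

theorem natCast_mul_convPow_succ (p : ℕ → ℝ) (k s : ℕ) :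
    s * convPow p (k + 1) s = (k + 1) * coeff s (mk p ^ k * (X * d⁄dX ℝ (mk p))) := by
  rw [convPow_eq_coeff, ← coeff_X_mul_derivative, X_mul_derivative_pow_succ, map_nsmul,
    nsmul_eq_mul, Nat.cast_succ]

theorem sum_antidiagonal_mul_convPow (a b : ℝ) (p : ℕ → ℝ) (k s : ℕ) :
    ∑ x ∈ antidiagonal s, (a * x.2 + b * x.1) * p x.2 * convPow p k x.1 =
      (a + b * k) * coeff s (mk p ^ k * (X * d⁄dX ℝ (mk p))) := by
  have hθ : coeff s (X * d⁄dX ℝ (mk p ^ k) * mk p) =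
      (k : ℝ) * coeff s (mk p ^ k * (X * d⁄dX ℝ (mk p))) := by
    rw [X_mul_derivative_pow_mul_self, map_nsmul, nsmul_eq_mul]
  calc _ = a * coeff s (mk p ^ k * (X * d⁄dX ℝ (mk p))) +
          b * coeff s (X * d⁄dX ℝ (mk p ^ k) * mk p) := by
        rw [coeff_mul, coeff_mul, mul_sum, mul_sum, ← sum_add_distrib]
        simp only [coeff_X_mul_derivative, coeff_mk, convPow_eq_coeff]
        exact sum_congr rfl fun x _ => by ring
    _ = _ := by rw [hθ]; ring

theorem convPow_nonneg {p : ℕ → ℝ} (hp0 : ∀ k, 0 ≤ p k) (k s : ℕ) : 0 ≤ convPow p k s := by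
  induction k generalizing s with
  | zero => unfold convPow; split_ifs <;> norm_num
  | succ k ih => exact sum_nonneg fun m _ => mul_nonneg (ih m) (hp0 _)

theorem convPow_le_one {p : ℕ → ℝ} (hp0 : ∀ k, 0 ≤ p k) (hp1 : HasSum p 1) (k s : ℕ) :
    convPow p k s ≤ 1 := by
  induction k generalizing s with
  | zero => unfold convPow; split_ifs <;> norm_num
  | succ k ih =>
    calc convPow p (k + 1) s ≤ ∑ m ∈ range (s + 1), p (s - m) :=
          sum_le_sum fun m _ => mul_le_of_le_one_left (hp0 _) (ih m)
      _ = ∑ m ∈ range (s + 1), p m := sum_range_reflect p (s + 1)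
      _ ≤ 1 := sum_le_hasSum _ (fun m _ => hp0 m) hp1

noncomputable def compoundPmf (μ p : ℕ → ℝ) (j : ℕ) : ℝ := ∑' k, μ k * convPow p k j

section Compound

variable {a b : ℝ} {μ p : ℕ → ℝ}

theorem summable_mul_convPow (hμ0 : ∀ k, 0 ≤ μ k) (hμ : Summable μ) (hp0 : ∀ k, 0 ≤ p k)
    (hp1 : HasSum p 1) (j : ℕ) : Summable fun k => μ k * convPow p k j :=
  Summable.of_nonneg_of_le (fun k => mul_nonneg (hμ0 k) (convPow_nonneg hp0 k j))
    (fun k => mul_le_of_le_one_right (hμ0 k) (convPow_le_one hp0 hp1 k j)) hμ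

theorem mul_convPow_le_compoundPmf (hμ0 : ∀ k, 0 ≤ μ k) (hμ : Summable μ) (hp0 : ∀ k, 0 ≤ p k)
    (hp1 : HasSum p 1) (k j : ℕ) : μ k * convPow p k j ≤ compoundPmf μ p j :=
  (summable_mul_convPow hμ0 hμ hp0 hp1 j).le_tsum k fun i _ =>
    mul_nonneg (hμ0 i) (convPow_nonneg hp0 i j)

theorem sum_antidiagonal_mul_compoundPmf
    (hpanjer : ∀ k : ℕ, ((k : ℝ) + 1) * μ (k + 1) = (a + b * k) * μ k)
    (hμ0 : ∀ k, 0 ≤ μ k) (hμ : Summable μ) (hp0 : ∀ k, 0 ≤ p k) (hp1 : HasSum p 1) (s : ℕ) :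
    ∑ x ∈ antidiagonal s, (a * x.2 + b * x.1) * p x.2 * compoundPmf μ p x.1 =
      s * compoundPmf μ p s := by
  have hsum := summable_mul_convPow hμ0 hμ hp0 hp1
  calc _ = ∑' k, ∑ x ∈ antidiagonal s, (a * x.2 + b * x.1) * p x.2 * (μ k * convPow p k x.1) := by
        simp only [compoundPmf, ← tsum_mul_left]
        exact (Summable.tsum_finsetSum fun x _ => (hsum x.1).mul_left _).symm
    _ = ∑' k, μ (k + 1) * (s * convPow p (k + 1) s) := tsum_congr fun k => by
        rw [natCast_mul_convPow_succ, ← mul_assoc, mul_comm (μ (k + 1)), hpanjer,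
          mul_right_comm, ← sum_antidiagonal_mul_convPow, sum_mul]
        exact sum_congr rfl fun x _ => by ring
    _ = ∑' k, μ k * (s * convPow p k s) := by
        have h : Summable fun k => μ k * (s * convPow p k s) :=
          ((hsum s).mul_left (s : ℝ)).congr fun k => mul_left_comm _ _ _
        rw [h.tsum_eq_zero_add]
        simp +contextual [convPow]
    _ = s * compoundPmf μ p s := by
        simp only [compoundPmf, ← tsum_mul_left, mul_left_comm]

theorem panjer_zero_pos (hpanjer : ∀ k : ℕ, ((k : ℝ) + 1) * μ (k + 1) = (a + b * k) * μ k)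
    (hμ0 : ∀ k, 0 ≤ μ k) (hμ : μ ≠ 0) : 0 < μ 0 := by
  refine (hμ0 0).lt_of_ne fun h => hμ <| funext fun k => ?_
  show μ k = 0
  induction k with
  | zero => exact h.symm
  | succ k ih =>
    have := hpanjer k
    rw [ih, mul_zero] at this
    exact (mul_eq_zero.mp this).resolve_left (by positivity)

theorem summable_mul_natCast_mul_of_panjer
    (hpanjer : ∀ k : ℕ, ((k : ℝ) + 1) * μ (k + 1) = (a + b * k) * μ k)
    (hμ0 : ∀ k, 0 ≤ μ k) (hμ1 : HasSum μ 1) (hp0 : ∀ k, 0 ≤ p k) (hp1 : HasSum p 1)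
    (hmean : Summable fun j : ℕ => j * compoundPmf μ p j) :
    Summable fun l : ℕ => a * (l * p l) := by
  rcases eq_or_ne a 0 with rfl | ha
  · simp
  have hμ1pos : 0 < μ 1 := by
    have h1 : μ 1 = a * μ 0 := by simpa using hpanjer 0
    have hμ : μ ≠ 0 := by rintro rfl; exact one_ne_zero (hμ1.unique hasSum_zero)
    refine (hμ0 1).lt_of_ne' ?_
    rw [h1]
    exact mul_ne_zero ha (panjer_zero_pos hpanjer hμ0 hμ).ne'
  refine (Summable.of_nonneg_of_le (fun l => mul_nonneg l.cast_nonneg (hp0 l)) (fun l => ?_)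
    (hmean.mul_left (μ 1)⁻¹)).mul_left a
  rw [le_inv_mul_iff₀ hμ1pos, mul_left_comm]
  refine mul_le_mul_of_nonneg_left ?_ l.cast_nonneg
  simpa [convPow_one] using mul_convPow_le_compoundPmf hμ0 hμ1.summable hp0 hp1 1 l

theorem sum_antidiagonal_stein
    (hpanjer : ∀ k : ℕ, ((k : ℝ) + 1) * μ (k + 1) = (a + b * k) * μ k)
    (hμ0 : ∀ k, 0 ≤ μ k) (hμ : Summable μ) (hp0 : ∀ k, 0 ≤ p k) (hp1 : HasSum p 1)
    (g : ℕ → ℝ) (n : ℕ) :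
    ∑ x ∈ antidiagonal n, compoundPmf μ p x.1 *
        ((a * (x.2 + 1) + b * x.1) * g (x.1 + (x.2 + 1)) * p (x.2 + 1)) =
      compoundPmf μ p (n + 1) * ((1 - b * p 0) * (n + 1 : ℕ) * g (n + 1)) := by
  have key := sum_antidiagonal_mul_compoundPmf hpanjer hμ0 hμ hp0 hp1 (n + 1)
  rw [Nat.sum_antidiagonal_succ'] at key
  have hg : ∀ x ∈ antidiagonal n, compoundPmf μ p x.1 *
      ((a * (x.2 + 1) + b * x.1) * g (x.1 + (x.2 + 1)) * p (x.2 + 1)) =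
        g (n + 1) * ((a * (x.2 + 1 : ℕ) + b * x.1) * p (x.2 + 1) * compoundPmf μ p x.1) := by
    intro x hx
    rw [← add_assoc, mem_antidiagonal.mp hx]
    push_cast; ring
  rw [sum_congr rfl hg, ← mul_sum]
  linear_combination g (n + 1) * key

end Compound

/-- Stein identity for compound distributions with counting distribution satisfying
Panjer's recursion `(k+1)μ_{k+1} = (a + bk)μ_k`: for `S_N` with pmf
`π_j = ∑_k μ_k p_{k,j}`, finite mean, and bounded `g`,
`E[∑_{l≥1} (a l + b S_N) g(S_N + l) p_l - (1 - b p₀) S_N g(S_N)] = 0`. -/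
theorem stein_operator_panjer_compound (a b : ℝ) (μ p : ℕ → ℝ)
    (hμ0 : ∀ k, 0 ≤ μ k) (hμ1 : HasSum μ 1)
    (hpanjer : ∀ k : ℕ, ((k : ℝ) + 1) * μ (k + 1) = (a + b * k) * μ k)
    (hp0 : ∀ k, 0 ≤ p k) (hp1 : HasSum p 1)
    (hmean : Summable (fun s : ℕ => (s : ℝ) * ∑' k : ℕ, μ k * convPow p k s))
    (g : ℕ → ℝ) (hg : ∃ C, ∀ j, |g j| ≤ C) :
    ∑' j : ℕ, (∑' k : ℕ, μ k * convPow p k j) *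
      ((∑' l : ℕ, (a * ((l : ℝ) + 1) + b * j) * g (j + (l + 1)) * p (l + 1)) -
        (1 - b * p 0) * (j : ℝ) * g j) = 0 := by
  obtain ⟨C, hC⟩ := hg
  change Summable fun j : ℕ => j * compoundPmf μ p j at hmean
  change ∑' j : ℕ, compoundPmf μ p j * _ = 0
  set Φ : ℕ × ℕ → ℝ := fun x =>
    compoundPmf μ p x.1 * ((a * (x.2 + 1) + b * x.1) * g (x.1 + (x.2 + 1)) * p (x.2 + 1))
  set h : ℕ → ℝ := fun j => compoundPmf μ p j * ((1 - b * p 0) * j * g j)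
  have hΦ : Summable Φ := summable_stein_family hmean.of_natCast_mul hmean hp1.summable
    (summable_mul_natCast_mul_of_panjer hpanjer hμ0 hμ1 hp0 hp1 hmean) hC
  have hh : HasSum h (∑' x, Φ x) := by
    rw [← hasSum_nat_add_iff' 1]
    simpa [h, ← sum_antidiagonal_stein hpanjer hμ0 hμ1.summable hp0 hp1 g] using
      hΦ.hasSum_sum_antidiagonal
  calc _ = ∑' j, ((∑' m, Φ (j, m)) - h j) := by simp only [mul_sub, ← tsum_mul_left, Φ, h]
    _ = 0 := by rw [hΦ.prod.tsum_sub hh.summable, ← hΦ.tsum_prod, hh.tsum_eq, sub_self]
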